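/- Let b ∈ ℂ and let y : [0,1] → ℂ be absolutely continuous with y' ∈ L²(0,1) and y(0) = 0. Then ∫₀¹ |y(t)|² dt ≤ e^{2|b|} ∫₀¹ |y'(t) + b y(t)|² dt. -/

import Mathlib

/-! Since `y 0 = 0`, `y t = ∫₀ᵗ (ℓy - b y)`, so `‖y t‖ ≤ ‖ℓy‖_{L¹} + ‖b‖ ∫₀ᵗ ‖y‖`, and Grönwall's
inequality turns this into `‖y t‖ ≤ e^{‖b‖ t} ‖ℓy‖_{L¹}`. Squaring, integrating over `[0,1]` and
using `‖ℓy‖_{L¹}² ≤ ‖ℓy‖_{L²}²` on the unit interval (a variance is nonnegative) gives the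
estimate. -/

open MeasureTheory Set

noncomputable section

/-- The second order differential expression `ℒy = -y'' - 2i(Im b)y' + |b|²y`. -/
def Lexpr (b : ℂ) (y y' y'' : ℝ → ℂ) : ℝ → ℂ :=
  fun t => -(y'' t) - 2 * Complex.I * (b.im : ℂ) * y' t + ((‖b‖ : ℝ) : ℂ) ^ 2 * y t

/-- `f` is absolutely continuous on `[0,T]` with derivative `f' ∈ L²(0,T)`. -/
def IsW1On (T : ℝ) (f f' : ℝ → ℂ) : Prop :=
  IntegrableOn f' (Icc (0:ℝ) T) ∧
  IntegrableOn (fun t => ‖f' t‖ ^ 2) (Icc (0:ℝ) T) ∧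
  ∀ t ∈ Icc (0:ℝ) T, f t = f 0 + ∫ s in (0:ℝ)..t, f' s

/-- A twice continuously differentiable solution (with derivative data `Y'`, `Y''`) of
the interval boundary value problem `-Y'' - 2i(Im b)Y' + |b|²Y = 0` on `(0,T)`,
`Y(0) = φ₀`, `Y(T) = φ₁`. -/
def IsIntervalSolution (b : ℂ) (T : ℝ) (φ0 φ1 : ℂ) (Y Y' Y'' : ℝ → ℂ) : Prop :=
  (∀ t ∈ Icc (0:ℝ) T, HasDerivWithinAt Y (Y' t) (Icc (0:ℝ) T) t) ∧
  (∀ t ∈ Icc (0:ℝ) T, HasDerivWithinAt Y' (Y'' t) (Icc (0:ℝ) T) t) ∧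
  ContinuousOn Y'' (Icc (0:ℝ) T) ∧
  (∀ t ∈ Ioo (0:ℝ) T, Lexpr b Y Y' Y'' t = 0) ∧
  Y 0 = φ0 ∧ Y T = φ1

open Real Topology intervalIntegral ProbabilityTheory

theorem add_mul_gronwallBound_zero (C K x : ℝ) :
    C + K * gronwallBound 0 K C x = C * exp (K * x) := by
  rcases eq_or_ne K 0 with rfl | hK
  · simp
  · rw [gronwallBound_of_K_ne_0 hK]
    field_simp
    ring

theorem le_mul_exp_of_le_add_mul_integral {v : ℝ → ℝ} {a b C K : ℝ}
    (hv : ContinuousOn v (Icc a b)) (hK : 0 ≤ K)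
    (h : ∀ t ∈ Icc a b, v t ≤ C + K * ∫ s in a..t, v s) :
    ∀ t ∈ Icc a b, v t ≤ C * exp (K * (t - a)) := by
  intro t ht
  have hab : a ≤ b := ht.1.trans ht.2
  have hprim_cont : ContinuousOn (fun u => ∫ s in a..u, v s) (Icc a b) := by
    have := continuousOn_primitive_interval (μ := volume) (f := v)
      (by rw [uIcc_of_le hab]; exact hv.integrableOn_Icc)
    rwa [uIcc_of_le hab] at this
  have hprim_deriv : ∀ u ∈ Ico a b,
      HasDerivWithinAt (fun u => ∫ s in a..u, v s) (v u) (Ici u) u := by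
    intro u hu
    have hIcc : Icc a b ∈ 𝓝[>] u := Icc_mem_nhdsGT_of_mem hu
    exact integral_hasDerivWithinAt_right
      (hv.mono (uIcc_subset_Icc (left_mem_Icc.2 hab) (Ico_subset_Icc_self hu))).intervalIntegrable
      ((hv.stronglyMeasurableAtFilter_nhdsWithin measurableSet_Icc u).filter_mono
        (nhdsWithin_le_of_mem hIcc))
      ((hv u (Ico_subset_Icc_self hu)).mono_of_mem_nhdsWithin hIcc)
  have hprim_le : (∫ s in a..t, v s) ≤ gronwallBound 0 K C (t - a) :=
    le_gronwallBound_of_liminf_deriv_right_le hprim_cont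
      (fun u hu _ hr => (hprim_deriv u hu).liminf_right_slope_le hr) (by simp)
      (fun u hu => by linarith [h u (Ico_subset_Icc_self hu)]) t ht
  calc v t ≤ C + K * ∫ s in a..t, v s := h t ht
    _ ≤ C + K * gronwallBound 0 K C (t - a) := by gcongr
    _ = C * exp (K * (t - a)) := add_mul_gronwallBound_zero C K (t - a)

theorem sq_integral_le_integral_sq {Ω : Type*} [MeasurableSpace Ω] {μ : Measure Ω}
    [IsProbabilityMeasure μ] {X : Ω → ℝ} (hX : MemLp X 2 μ) :
    (∫ ω, X ω ∂μ) ^ 2 ≤ ∫ ω, X ω ^ 2 ∂μ := by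
  have := variance_nonneg X μ
  rw [variance_eq_sub hX] at this
  simpa [sub_nonneg] using this

namespace IsW1On

variable {T : ℝ} {f f' : ℝ → ℂ}

theorem continuousOn (hf : IsW1On T f f') : ContinuousOn f (Icc 0 T) := by
  rcases lt_or_ge T 0 with hT | hT
  · simp [Icc_eq_empty_of_lt hT]
  have hprim := continuousOn_primitive_interval (μ := volume) (a := 0) (b := T)
    (by simpa [uIcc_of_le hT] using hf.1)
  rw [uIcc_of_le hT] at hprim
  exact (continuousOn_const.add hprim).congr hf.2.2

theorem memLp_two (hf : IsW1On T f f') : MemLp f 2 (volume.restrict (Icc 0 T)) := by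
  obtain ⟨C, hC⟩ := isCompact_Icc.exists_bound_of_continuousOn hf.continuousOn
  exact MemLp.of_bound (hf.continuousOn.aestronglyMeasurable measurableSet_Icc) C
    (ae_restrict_of_forall_mem measurableSet_Icc hC)

theorem memLp_two_deriv (hf : IsW1On T f f') : MemLp f' 2 (volume.restrict (Icc 0 T)) :=
  (memLp_two_iff_integrable_sq_norm hf.1.aestronglyMeasurable).2 hf.2.1

theorem norm_le_integral_add_mul_integral (hf : IsW1On T f f') (h0 : f 0 = 0) (b : ℂ) :
    ∀ t ∈ Icc 0 T, ‖f t‖ ≤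
      (∫ s in Icc 0 T, ‖f' s + b * f s‖) + ‖b‖ * ∫ s in 0..t, ‖f s‖ := by
  intro t ht
  have hsub : uIcc 0 t ⊆ Icc 0 T :=
    uIcc_subset_Icc (left_mem_Icc.2 (ht.1.trans ht.2)) ht
  have hf'_int : IntervalIntegrable f' volume 0 t :=
    (hf.1.mono_set hsub).intervalIntegrable
  have hf_int : IntervalIntegrable f volume 0 t :=
    (hf.continuousOn.mono hsub).intervalIntegrable
  have hg_int : IntegrableOn (fun s => f' s + b * f s) (Icc 0 T) :=
    hf.1.add (hf.continuousOn.integrableOn_Icc.const_mul b)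
  have hrepr : f t = (∫ s in 0..t, f' s + b * f s) - b * ∫ s in 0..t, f s := by
    rw [hf.2.2 t ht, h0, zero_add, ← intervalIntegral.integral_const_mul,
      ← integral_sub (hf'_int.add (hf_int.const_mul b)) (hf_int.const_mul b)]
    simp
  have hg_le : ‖∫ s in 0..t, f' s + b * f s‖ ≤ ∫ s in Icc 0 T, ‖f' s + b * f s‖ :=
    norm_integral_le_integral_norm_uIoc.trans <|
      setIntegral_mono_set hg_int.norm (ae_of_all _ fun _ => norm_nonneg _)
        (uIoc_subset_uIcc.trans hsub).eventuallyLE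
  calc ‖f t‖ ≤ ‖∫ s in 0..t, f' s + b * f s‖ + ‖b‖ * ‖∫ s in 0..t, f s‖ := by
        rw [hrepr, ← norm_mul]
        exact norm_sub_le _ _
    _ ≤ _ := by gcongr; exact norm_integral_le_integral_norm ht.1

theorem norm_le_integral_mul_exp (hf : IsW1On T f f') (h0 : f 0 = 0) (b : ℂ) :
    ∀ t ∈ Icc 0 T, ‖f t‖ ≤ (∫ s in Icc 0 T, ‖f' s + b * f s‖) * exp (‖b‖ * t) := by
  simpa using le_mul_exp_of_le_add_mul_integral hf.continuousOn.norm (norm_nonneg b)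
    (hf.norm_le_integral_add_mul_integral h0 b)

end IsW1On

/-- Poincaré-type estimate for the expression `ℓy = y' + by`:
if `y` is absolutely continuous on `[0,1]` with `y' ∈ L²(0,1)` and `y(0) = 0`, then
`∫₀¹ |y|² ≤ e^{2|b|} ∫₀¹ |y' + by|²`. -/
theorem poincare_type_estimate (b : ℂ) (y y' : ℝ → ℂ)
    (hy : IsW1On 1 y y') (h0 : y 0 = 0) :
    ∫ t in Icc (0:ℝ) 1, ‖y t‖ ^ 2 ≤
      Real.exp (2 * ‖b‖) * ∫ t in Icc (0:ℝ) 1, ‖y' t + b * y t‖ ^ 2 := by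
  have : IsProbabilityMeasure (volume.restrict (Icc (0:ℝ) 1)) := ⟨by simp⟩
  set H := ∫ t in Icc (0:ℝ) 1, ‖y' t + b * y t‖
  have hpointwise : ∀ t ∈ Icc (0:ℝ) 1, ‖y t‖ ^ 2 ≤ exp (2 * ‖b‖) * H ^ 2 := by
    intro t ht
    have hH : 0 ≤ H := by positivity
    calc ‖y t‖ ^ 2 ≤ (H * exp (‖b‖ * t)) ^ 2 := by
          gcongr; exact hy.norm_le_integral_mul_exp h0 b t ht
      _ ≤ (H * exp ‖b‖) ^ 2 := by gcongr; nlinarith [ht.2, norm_nonneg b]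
      _ = exp (2 * ‖b‖) * H ^ 2 := by rw [mul_pow, ← exp_nat_mul]; ring_nf
  calc ∫ t in Icc (0:ℝ) 1, ‖y t‖ ^ 2 ≤ ∫ _ in Icc (0:ℝ) 1, exp (2 * ‖b‖) * H ^ 2 :=
        integral_mono_of_nonneg (ae_of_all _ fun _ => by positivity) (integrable_const _)
          (ae_restrict_of_forall_mem measurableSet_Icc hpointwise)
    _ = exp (2 * ‖b‖) * H ^ 2 := by simp
    _ ≤ exp (2 * ‖b‖) * ∫ t in Icc (0:ℝ) 1, ‖y' t + b * y t‖ ^ 2 := by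
        gcongr
        exact sq_integral_le_integral_sq (hy.memLp_two_deriv.add (hy.memLp_two.const_mul b)).norm
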